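/- For each j ∈ ℕ and each spiral strip S_j^k, the following holds: if a plane curve in Π_{x_j^k} joins the entrance segment [x_j^k, x(2π)] to the exit segment [x(2π(M_j−1)), x(2πM_j)] and is disjoint from the Archimedean spiral {x(ψ) : ψ ∈ [0, 2πM_j]}, then for M_j chosen large enough its length is at least 10. -/

import Mathlib

/-!
Identify the plane with `ℂ` and measure the radius of a point `x` by the spiral parameter
`ψ(x) = (ρ₀ - ‖x‖) / ε`, the parameter at which the spiral has the radius of `x`. While the curve
crosses a band `ψ ∈ [ℓ, ℓ + 4π]` it avoids the ray through the spiral point of its own radius, so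
it has a continuous argument `Θ` with `ψ < Θ < ψ + 2π`; across the band `Θ` grows by more than
`2π`, and the curve passes through two pairs of antipodal directions, which costs length at least
`4(ρ₀ - ε(ℓ + 4π)) ≥ 2ρ₀` once `ε(ℓ + 4π) ≤ ρ₀ / 2`. Going from the entrance (`ψ ≤ 2π`) to the exit
(`ψ ≥ 2π(M - 1)`) the curve crosses `⌈5 / ρ₀⌉` consecutive bands, hence has length at least `10`.
-/

open Set Real

/-- The Archimedean spiral with initial radius `ρ₀` and pitch parameter `ε`:
in polar coordinates, `ρ(ψ) = ρ₀ - ε·ψ`. -/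
noncomputable def archSpiral (ρ₀ ε ψ : ℝ) : EuclideanSpace ℝ (Fin 2) :=
  (WithLp.equiv 2 (Fin 2 → ℝ)).symm ![(ρ₀ - ε * ψ) * Real.cos ψ, (ρ₀ - ε * ψ) * Real.sin ψ]

open Complex ComplexOrder

section Crossing

variable {α : Type*} [ConditionallyCompleteLinearOrder α] [TopologicalSpace α] [OrderTopology α]
  {f : ℝ → α} {a b : ℝ}

theorem exists_first_eq_of_le_of_le (hab : a ≤ b) (hf : ContinuousOn f (Icc a b)) {y : α}
    (ha : f a ≤ y) (hb : y ≤ f b) : ∃ T ∈ Icc a b, f T = y ∧ ∀ t ∈ Ico a T, f t < y := by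
  set K := Icc a b ∩ f ⁻¹' Ici y
  have hK : IsClosed K := hf.preimage_isClosed_of_isClosed isClosed_Icc isClosed_Ici
  have hKbdd : BddBelow K := ⟨a, fun t ht => ht.1.1⟩
  have hT : sInf K ∈ K := hK.csInf_mem ⟨b, right_mem_Icc.2 hab, hb⟩ hKbdd
  obtain ⟨τ, hτ, hτy⟩ := intermediate_value_Icc hT.1.1 (hf.mono (Icc_subset_Icc_right hT.1.2))
    ⟨ha, hT.2⟩
  have hτT : τ = sInf K :=
    le_antisymm hτ.2 (csInf_le hKbdd ⟨⟨hτ.1, hτ.2.trans hT.1.2⟩, hτy.ge⟩)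
  refine ⟨sInf K, hT.1, hτT ▸ hτy, fun t ht => not_le.1 fun hyt => ?_⟩
  exact (csInf_le hKbdd ⟨⟨ht.1, ht.2.le.trans hT.1.2⟩, hyt⟩).not_gt ht.2

theorem exists_last_eq_of_le_of_le (hab : a ≤ b) (hf : ContinuousOn f (Icc a b)) {y : α}
    (ha : f a ≤ y) (hb : y ≤ f b) : ∃ S ∈ Icc a b, f S = y ∧ ∀ t ∈ Ioc S b, y < f t := by
  set K := Icc a b ∩ f ⁻¹' Iic y
  have hK : IsClosed K := hf.preimage_isClosed_of_isClosed isClosed_Icc isClosed_Iic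
  have hKbdd : BddAbove K := ⟨b, fun t ht => ht.1.2⟩
  have hS : sSup K ∈ K := hK.csSup_mem ⟨a, left_mem_Icc.2 hab, ha⟩ hKbdd
  obtain ⟨τ, hτ, hτy⟩ := intermediate_value_Icc hS.1.2 (hf.mono (Icc_subset_Icc_left hS.1.1))
    ⟨hS.2, hb⟩
  have hτS : τ = sSup K :=
    le_antisymm (le_csSup hKbdd ⟨⟨hS.1.1.trans hτ.1, hτ.2⟩, hτy.le⟩) hτ.1
  refine ⟨sSup K, hS.1, hτS ▸ hτy, fun t ht => not_le.1 fun hty => ?_⟩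
  exact (le_csSup hKbdd ⟨⟨hS.1.1.trans ht.1.le, ht.2⟩, hty⟩).not_gt ht.1

theorem exists_Icc_mapsTo_Icc_of_crossing (hab : a ≤ b) (hf : ContinuousOn f (Icc a b))
    {y z : α} (hyz : y ≤ z) (ha : f a ≤ y) (hb : z ≤ f b) :
    ∃ S T, a ≤ S ∧ S ≤ T ∧ T ≤ b ∧ f S = y ∧ f T = z ∧ MapsTo f (Icc S T) (Icc y z) := by
  obtain ⟨T, hT, hTz, hbelow⟩ := exists_first_eq_of_le_of_le hab hf (ha.trans hyz) hb
  obtain ⟨S, hS, hSy, habove⟩ :=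
    exists_last_eq_of_le_of_le hT.1 (hf.mono (Icc_subset_Icc_right hT.2)) ha (hTz ▸ hyz)
  refine ⟨S, T, hS.1, hS.2, hT.2, hSy, hTz, fun t ht => ⟨?_, ?_⟩⟩
  · rcases ht.1.eq_or_lt with rfl | hSt
    · exact hSy.ge
    · exact (habove t ⟨hSt, ht.2⟩).le
  · rcases ht.2.eq_or_lt with rfl | htT
    · exact hTz.le
    · exact (hbelow t ⟨hS.1.trans ht.1, htT⟩).le

end Crossing

theorem eVariationOn.natCast_mul_le_of_crossings {E : Type*} [PseudoEMetricSpace E] {f : ℝ → E}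
    {u : ℝ → ℝ} {a b : ℝ} (hu : ContinuousOn u (Icc a b)) {L : ℕ → ℝ} (hL : Monotone L)
    (ha : u a ≤ L 0) {c : ENNReal} {n : ℕ}
    (hcross : ∀ k < n, ∀ s ∈ Icc a b, ∀ t ∈ Icc s b, u s = L k → L (k + 1) ≤ u t →
      c ≤ eVariationOn f (Icc s t))
    {t : ℝ} (ht : t ∈ Icc a b) (hLt : L n ≤ u t) : n * c ≤ eVariationOn f (Icc a t) := by
  induction n generalizing t with
  | zero => simp
  | succ n ih =>
    obtain ⟨s, hs, hus⟩ := intermediate_value_Icc ht.1 (hu.mono (Icc_subset_Icc_right ht.2))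
      ⟨ha.trans (hL n.zero_le), (hL n.le_succ).trans hLt⟩
    have hbefore := ih (fun k hk => hcross k (hk.trans n.lt_succ_self)) ⟨hs.1, hs.2.trans ht.2⟩
      hus.ge
    have hlast := hcross n n.lt_succ_self s ⟨hs.1, hs.2.trans ht.2⟩ t ⟨hs.2, ht.2⟩ hus hLt
    calc ((n + 1 : ℕ) : ENNReal) * c = n * c + c := by push_cast; ring
      _ ≤ eVariationOn f (Icc a s) + eVariationOn f (Icc s t) := add_le_add hbefore hlast
      _ ≤ eVariationOn f (Icc a s ∪ Icc s t) :=
        eVariationOn.add_le_union f fun x hx y hy => hx.2.trans hy.1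
      _ = eVariationOn f (Icc a t) := by rw [Icc_union_Icc_eq_Icc hs.1 hs.2]

theorem Complex.norm_mem_uIcc_of_mem_segment {x y : ℝ} (hx : 0 ≤ x) (hy : 0 ≤ y) {z : ℂ}
    (hz : z ∈ segment ℝ (x : ℂ) y) : ‖z‖ ∈ uIcc x y := by
  obtain ⟨a, b, ha, hb, hab, rfl⟩ := hz
  have hreal : a • (x : ℂ) + b • (y : ℂ) = ↑(a * x + b * y) := by
    simp only [Complex.real_smul]; push_cast; ring
  rw [hreal, norm_real, Real.norm_of_nonneg (by positivity)]
  exact segment_subset_uIcc x y ⟨a, b, ha, hb, hab, by simp only [smul_eq_mul]⟩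

theorem Complex.dist_mul_exp_mul_I_add_pi {r s : ℝ} (hr : 0 ≤ r) (hs : 0 ≤ s) (θ : ℝ) :
    dist (r * exp (θ * I)) (s * exp (↑(θ + π) * I)) = r + s := by
  have hanti : exp (↑(θ + π) * I) = -exp (θ * I) := by
    rw [ofReal_add, add_mul, exp_add, exp_pi_mul_I, mul_neg_one]
  rw [dist_eq, hanti, show (r : ℂ) * exp (θ * I) - s * -exp (θ * I) = ↑(r + s) * exp (θ * I) by
    push_cast; ring, norm_mul, norm_exp_ofReal_mul_I, mul_one, norm_real, Real.norm_eq_abs,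
    abs_of_nonneg (add_nonneg hr hs)]

theorem Complex.exists_continuousOn_arg_of_ne {ζ : ℝ → ℂ} {u : ℝ → ℝ} {s : Set ℝ}
    (hζ : ContinuousOn ζ s) (hu : ContinuousOn u s)
    (hne : ∀ t ∈ s, ζ t ≠ ‖ζ t‖ * exp (u t * I)) :
    ∃ Θ : ℝ → ℝ, ContinuousOn Θ s ∧
      ∀ t ∈ s, ζ t = ‖ζ t‖ * exp (Θ t * I) ∧ u t < Θ t ∧ Θ t < u t + 2 * π := by
  -- rotating by `-(u + π)` moves the forbidden ray onto the negative real axis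
  set ξ : ℝ → ℂ := fun t => ζ t * exp (-(↑(u t + π) * I))
  have hζξ : ∀ t, ζ t = ξ t * exp (↑(u t + π) * I) := fun t => by
    simp only [ξ, mul_assoc, ← exp_add, neg_add_cancel, exp_zero, mul_one]
  have hnorm : ∀ t, ‖ξ t‖ = ‖ζ t‖ := fun t => by
    simp only [ξ, norm_mul, ← neg_mul, ← ofReal_neg, norm_exp_ofReal_mul_I, mul_one]
  have hslit : ∀ t ∈ s, ξ t ∈ slitPlane := fun t ht => by
    refine mem_slitPlane_iff_not_le_zero.2 fun hle => hne t ht ?_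
    have hξ : ξ t = -‖ζ t‖ := by
      rw [← hnorm, ← norm_neg, ← eq_coe_norm_of_nonneg (neg_nonneg.2 hle), neg_neg]
    conv_lhs => rw [hζξ t, hξ, ofReal_add, add_mul, exp_add, exp_pi_mul_I]
    ring
  have hξ : ContinuousOn ξ s := hζ.mul (by fun_prop)
  refine ⟨fun t => arg (ξ t) + (u t + π),
    fun t ht => ((continuousAt_arg (hslit t ht)).comp_continuousWithinAt (hξ t ht)).add
      ((hu t ht).add continuousWithinAt_const), fun t ht => ⟨?_, ?_, ?_⟩⟩
  · conv_lhs => rw [hζξ t, ← norm_mul_exp_arg_mul_I (ξ t), hnorm]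
    rw [mul_assoc, ← exp_add, ← add_mul, ← ofReal_add]
  · linarith [neg_pi_lt_arg (ξ t)]
  · linarith [(arg_le_pi (ξ t)).lt_of_ne (slitPlane_arg_ne_pi (hslit t ht))]

theorem Complex.ofReal_four_mul_le_eVariationOn_of_turn {ζ : ℝ → ℂ} {Θ : ℝ → ℝ} {a b r : ℝ}
    (hab : a ≤ b) (hΘ : ContinuousOn Θ (Icc a b))
    (hpolar : ∀ t ∈ Icc a b, ζ t = ‖ζ t‖ * exp (Θ t * I)) (hturn : Θ a + 2 * π ≤ Θ b)
    (hr : ∀ t ∈ Icc a b, r ≤ ‖ζ t‖) :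
    ENNReal.ofReal (4 * r) ≤ eVariationOn ζ (Icc a b) := by
  have hπ := pi_pos
  obtain ⟨τ, hτ, hΘτ⟩ := intermediate_value_Icc hab hΘ
    (⟨by linarith, by linarith⟩ : Θ a + π ∈ Icc (Θ a) (Θ b))
  obtain ⟨τ', hτ', hΘτ'⟩ := intermediate_value_Icc hτ.2 (hΘ.mono (Icc_subset_Icc_left hτ.1))
    (⟨by linarith, by linarith⟩ : Θ τ + π ∈ Icc (Θ τ) (Θ b))
  have hτ'ab : τ' ∈ Icc a b := ⟨hτ.1.trans hτ'.1, hτ'.2⟩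
  have hopposite : ∀ x ∈ Icc a b, ∀ y ∈ Icc a b, Θ y = Θ x + π →
      ENNReal.ofReal (2 * r) ≤ edist (ζ x) (ζ y) := fun x hx y hy hxy => by
    rw [edist_dist, hpolar x hx, hpolar y hy, hxy,
      dist_mul_exp_mul_I_add_pi (norm_nonneg _) (norm_nonneg _)]
    exact ENNReal.ofReal_le_ofReal (by linarith [hr x hx, hr y hy])
  calc ENNReal.ofReal (4 * r) ≤ ENNReal.ofReal (2 * r) + ENNReal.ofReal (2 * r) := by
        rw [show 4 * r = 2 * r + 2 * r by ring]; exact ENNReal.ofReal_add_le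
    _ ≤ edist (ζ a) (ζ τ) + edist (ζ τ) (ζ τ') :=
        add_le_add (hopposite a (left_mem_Icc.2 hab) τ hτ hΘτ) (hopposite τ hτ τ' hτ'ab hΘτ')
    _ ≤ eVariationOn ζ (Icc a τ) + eVariationOn ζ (Icc τ b) :=
        add_le_add (eVariationOn.edist_le ζ (left_mem_Icc.2 hτ.1) (right_mem_Icc.2 hτ.1))
          (eVariationOn.edist_le ζ (left_mem_Icc.2 hτ.2) hτ')
    _ ≤ eVariationOn ζ (Icc a τ ∪ Icc τ b) :=
        eVariationOn.add_le_union ζ fun x hx y hy => hx.2.trans hy.1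
    _ = eVariationOn ζ (Icc a b) := by rw [Icc_union_Icc_eq_Icc hτ.1 hτ.2]

theorem Complex.ofReal_four_mul_le_eVariationOn_of_crossing {ζ : ℝ → ℂ} {u : ℝ → ℝ}
    {a b ℓ r : ℝ} (hab : a ≤ b) (hζ : ContinuousOn ζ (Icc a b)) (hu : ContinuousOn u (Icc a b))
    (ha : u a ≤ ℓ) (hb : ℓ + 4 * π ≤ u b)
    (hne : ∀ t ∈ Icc a b, u t ∈ Icc ℓ (ℓ + 4 * π) → ζ t ≠ ‖ζ t‖ * exp (u t * I))
    (hr : ∀ t ∈ Icc a b, u t ∈ Icc ℓ (ℓ + 4 * π) → r ≤ ‖ζ t‖) :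
    ENNReal.ofReal (4 * r) ≤ eVariationOn ζ (Icc a b) := by
  obtain ⟨S, T, haS, hST, hTb, huS, huT, hband⟩ :=
    exists_Icc_mapsTo_Icc_of_crossing hab hu (by linarith [pi_pos]) ha hb
  have hsub : Icc S T ⊆ Icc a b := Icc_subset_Icc haS hTb
  obtain ⟨Θ, hΘ, hpolar⟩ := exists_continuousOn_arg_of_ne (hζ.mono hsub) (hu.mono hsub)
    fun t ht => hne t (hsub ht) (hband ht)
  have hturn : Θ S + 2 * π ≤ Θ T := by
    linarith [(hpolar S (left_mem_Icc.2 hST)).2.2, (hpolar T (right_mem_Icc.2 hST)).2.1]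
  exact (ofReal_four_mul_le_eVariationOn_of_turn hST hΘ (fun t ht => (hpolar t ht).1) hturn
    fun t ht => hr t (hsub ht) (hband ht)).trans (eVariationOn.mono ζ hsub)

theorem orthonormalBasisOneI_repr_symm_archSpiral (ρ₀ ε ψ : ℝ) :
    orthonormalBasisOneI.repr.symm (archSpiral ρ₀ ε ψ) = ↑(ρ₀ - ε * ψ) * exp (ψ * I) := by
  rw [orthonormalBasisOneI_repr_symm_apply, exp_mul_I, ← ofReal_cos, ← ofReal_sin]
  simp only [archSpiral, WithLp.equiv_symm_apply, PiLp.toLp_apply, Matrix.cons_val_zero,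
    Matrix.cons_val_one]
  push_cast
  ring

theorem orthonormalBasisOneI_repr_symm_archSpiral_two_pi_mul (ρ₀ ε : ℝ) (k : ℤ) :
    orthonormalBasisOneI.repr.symm (archSpiral ρ₀ ε (2 * π * k)) = ↑(ρ₀ - ε * (2 * π * k)) := by
  rw [orthonormalBasisOneI_repr_symm_archSpiral,
    show ((2 * π * k : ℝ) : ℂ) * I = k * (2 * π * I) by push_cast; ring,
    exp_int_mul_two_pi_mul_I, mul_one]

theorem norm_mem_uIcc_of_mem_segment_archSpiral {ρ₀ ε : ℝ} {k l : ℤ}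
    (hk : 0 ≤ ρ₀ - ε * (2 * π * k)) (hl : 0 ≤ ρ₀ - ε * (2 * π * l))
    {x : EuclideanSpace ℝ (Fin 2)}
    (hx : x ∈ segment ℝ (archSpiral ρ₀ ε (2 * π * k)) (archSpiral ρ₀ ε (2 * π * l))) :
    ‖x‖ ∈ uIcc (ρ₀ - ε * (2 * π * k)) (ρ₀ - ε * (2 * π * l)) := by
  set e := orthonormalBasisOneI.repr.symm
  have hex : e x ∈ segment ℝ (e (archSpiral ρ₀ ε (2 * π * k))) (e (archSpiral ρ₀ ε (2 * π * l))) :=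
    image_segment ℝ e.toLinearEquiv.toLinearMap.toAffineMap _ _ ▸ mem_image_of_mem _ hx
  rw [orthonormalBasisOneI_repr_symm_archSpiral_two_pi_mul,
    orthonormalBasisOneI_repr_symm_archSpiral_two_pi_mul] at hex
  simpa only [LinearIsometryEquiv.norm_map] using Complex.norm_mem_uIcc_of_mem_segment hk hl hex

noncomputable def spiralParam (ρ₀ ε : ℝ) (x : EuclideanSpace ℝ (Fin 2)) : ℝ := (ρ₀ - ‖x‖) / ε

section spiralParam

variable {ρ₀ ε : ℝ}

theorem sub_mul_spiralParam (hε : ε ≠ 0) (x : EuclideanSpace ℝ (Fin 2)) :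
    ρ₀ - ε * spiralParam ρ₀ ε x = ‖x‖ := by
  rw [spiralParam, mul_div_cancel₀ _ hε, sub_sub_cancel]

theorem spiralParam_le_iff (hε : 0 < ε) {x : EuclideanSpace ℝ (Fin 2)} {ψ : ℝ} :
    spiralParam ρ₀ ε x ≤ ψ ↔ ρ₀ - ε * ψ ≤ ‖x‖ := by
  rw [spiralParam, div_le_iff₀ hε]; constructor <;> intro h <;> linarith

theorem le_spiralParam_iff (hε : 0 < ε) {x : EuclideanSpace ℝ (Fin 2)} {ψ : ℝ} :
    ψ ≤ spiralParam ρ₀ ε x ↔ ‖x‖ ≤ ρ₀ - ε * ψ := by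
  rw [spiralParam, le_div_iff₀ hε]; constructor <;> intro h <;> linarith

theorem continuousOn_spiralParam {δ : ℝ → EuclideanSpace ℝ (Fin 2)} {s : Set ℝ}
    (hδ : ContinuousOn δ s) : ContinuousOn (fun t => spiralParam ρ₀ ε (δ t)) s :=
  ((continuous_const.sub continuous_norm).comp_continuousOn hδ).div_const ε

theorem spiralParam_mem_Icc_of_mem_segment_archSpiral (hε : 0 < ε) {k : ℤ}
    (hk : ε * (2 * π * (k + 1)) ≤ ρ₀) {x : EuclideanSpace ℝ (Fin 2)}
    (hx : x ∈ segment ℝ (archSpiral ρ₀ ε (2 * π * k)) (archSpiral ρ₀ ε (2 * π * (k + 1)))) :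
    spiralParam ρ₀ ε x ∈ Icc (2 * π * k) (2 * π * (k + 1)) := by
  have hstep := mul_pos hε pi_pos
  have hx' := norm_mem_uIcc_of_mem_segment_archSpiral (ρ₀ := ρ₀) (ε := ε) (k := k) (l := k + 1)
    (by nlinarith) (by push_cast; linarith) (by push_cast; exact hx)
  rw [uIcc_of_ge (by push_cast; nlinarith)] at hx'
  push_cast at hx'
  exact ⟨(le_spiralParam_iff hε).2 hx'.2, (spiralParam_le_iff hε).2 hx'.1⟩

theorem ofReal_four_mul_le_eVariationOn_of_crossing_archSpiral (hε : 0 < ε)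
    {δ : ℝ → EuclideanSpace ℝ (Fin 2)} {s t ℓ : ℝ} (hst : s ≤ t) (hδ : ContinuousOn δ (Icc s t))
    (hs : spiralParam ρ₀ ε (δ s) ≤ ℓ) (ht : ℓ + 4 * π ≤ spiralParam ρ₀ ε (δ t))
    (havoid : ∀ τ ∈ Icc s t, ∀ ψ ∈ Icc ℓ (ℓ + 4 * π), δ τ ≠ archSpiral ρ₀ ε ψ) :
    ENNReal.ofReal (4 * (ρ₀ - ε * (ℓ + 4 * π))) ≤ eVariationOn δ (Icc s t) := by
  set e := orthonormalBasisOneI.repr.symm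
  have hnorm : ∀ τ, ‖e (δ τ)‖ = ρ₀ - ε * spiralParam ρ₀ ε (δ τ) := fun τ => by
    rw [LinearIsometryEquiv.norm_map, sub_mul_spiralParam hε.ne']
  have hne : ∀ τ ∈ Icc s t, spiralParam ρ₀ ε (δ τ) ∈ Icc ℓ (ℓ + 4 * π) →
      e (δ τ) ≠ ‖e (δ τ)‖ * exp (spiralParam ρ₀ ε (δ τ) * I) := fun τ hτ hψ hpolar => by
    refine havoid τ hτ _ hψ (e.injective ?_)
    rw [orthonormalBasisOneI_repr_symm_archSpiral, ← hnorm, ← hpolar]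
  have hr : ∀ τ ∈ Icc s t, spiralParam ρ₀ ε (δ τ) ∈ Icc ℓ (ℓ + 4 * π) →
      ρ₀ - ε * (ℓ + 4 * π) ≤ ‖e (δ τ)‖ := fun τ _ hψ => by
    rw [hnorm]; nlinarith [hψ.2]
  calc ENNReal.ofReal (4 * (ρ₀ - ε * (ℓ + 4 * π))) ≤ eVariationOn (e ∘ δ) (Icc s t) :=
        Complex.ofReal_four_mul_le_eVariationOn_of_crossing hst (e.continuous.comp_continuousOn hδ)
          (continuousOn_spiralParam hδ) hs ht hne hr
    _ ≤ eVariationOn δ (Icc s t) := by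
        simpa using (e.lipschitz.lipschitzOnWith (s := univ)).comp_eVariationOn_le
          (mapsTo_univ δ (Icc s t))

end spiralParam

/-- the labyrinth property (∗₁). For every initial radius `ρ₀ > 0` there is
`M₀` such that for all `M ≥ M₀` and every (small) pitch `ε > 0` with `ε·2πM < ρ₀`:
any plane curve joining the entrance segment `[x(0), x(2π)]` to the exit segment
`[x(2π(M−1)), x(2πM)]` and disjoint from the Archimedean spiral
`{x(ψ) : ψ ∈ [0, 2πM]}` has length at least `10`. -/
theorem stmt12 (ρ₀ : ℝ) (hρ₀ : 0 < ρ₀) :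
    ∃ M₀ : ℕ, ∀ M : ℕ, M₀ ≤ M → ∀ ε : ℝ, 0 < ε → ε * (2 * π * M) < ρ₀ →
      ∀ δ : ℝ → EuclideanSpace ℝ (Fin 2), ContinuousOn δ (Icc 0 1) →
        δ 0 ∈ segment ℝ (archSpiral ρ₀ ε 0) (archSpiral ρ₀ ε (2 * π)) →
        δ 1 ∈ segment ℝ (archSpiral ρ₀ ε (2 * π * ((M : ℝ) - 1)))
          (archSpiral ρ₀ ε (2 * π * M)) →
        (∀ t ∈ Icc (0:ℝ) 1, ∀ ψ ∈ Icc (0:ℝ) (2 * π * M), δ t ≠ archSpiral ρ₀ ε ψ) →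
        ENNReal.ofReal 10 ≤ eVariationOn δ (Icc (0:ℝ) 1) := by
  set N := ⌈5 / ρ₀⌉₊
  refine ⟨4 * N + 2, fun M hM ε hε hεM δ hδ hentry hexit havoid => ?_⟩
  have hπ := pi_pos
  have hMR : 4 * (N : ℝ) + 2 ≤ M := by exact_mod_cast hM
  set L : ℕ → ℝ := fun k => 2 * π + 4 * π * k
  have hL : Monotone L := fun k l hkl => by
    have : (k : ℝ) ≤ l := by exact_mod_cast hkl
    simp only [L]; nlinarith
  have hstart : spiralParam ρ₀ ε (δ 0) ≤ L 0 := by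
    simpa [L] using (spiralParam_mem_Icc_of_mem_segment_archSpiral hε (k := 0)
      (by simp; nlinarith) (by simpa using hentry)).2
  have hend : L N ≤ spiralParam ρ₀ ε (δ 1) := by
    refine le_trans ?_ (spiralParam_mem_Icc_of_mem_segment_archSpiral hε (k := M - 1)
      (by push_cast; simpa using hεM.le) (by push_cast; simpa using hexit)).1
    push_cast; simp only [L]; nlinarith
  have hcross : ∀ k < N, ∀ s ∈ Icc (0 : ℝ) 1, ∀ t ∈ Icc s 1,
      spiralParam ρ₀ ε (δ s) = L k → L (k + 1) ≤ spiralParam ρ₀ ε (δ t) →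
      ENNReal.ofReal (2 * ρ₀) ≤ eVariationOn δ (Icc s t) := by
    intro k hk s hs t ht hus hut
    have hkN : (k : ℝ) + 1 ≤ N := by exact_mod_cast hk
    have hLk : L (k + 1) = L k + 4 * π := by simp only [L]; push_cast; ring
    refine le_trans (ENNReal.ofReal_le_ofReal ?_)
      (ofReal_four_mul_le_eVariationOn_of_crossing_archSpiral hε ht.1
        (hδ.mono (Icc_subset_Icc hs.1 ht.2)) hus.le (hLk ▸ hut) fun τ hτ ψ hψ =>
          havoid τ ⟨hs.1.trans hτ.1, hτ.2.trans ht.2⟩ ψ ⟨?_, ?_⟩)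
    · simp only [L]; nlinarith
    · simp only [L] at hψ; nlinarith [hψ.1, Nat.cast_nonneg (α := ℝ) k]
    · simp only [L] at hψ; nlinarith [hψ.2]
  calc ENNReal.ofReal 10 ≤ N * ENNReal.ofReal (2 * ρ₀) := by
        rw [← ENNReal.ofReal_natCast, ← ENNReal.ofReal_mul (Nat.cast_nonneg _)]
        have := (div_le_iff₀ hρ₀).1 (Nat.le_ceil (5 / ρ₀))
        exact ENNReal.ofReal_le_ofReal (by linarith)
    _ ≤ eVariationOn δ (Icc 0 1) :=
        eVariationOn.natCast_mul_le_of_crossings (continuousOn_spiralParam hδ) hL hstart hcross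
          ⟨zero_le_one, le_rfl⟩ hend
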